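/- For every complex t and fixed z, w, ν, α, ξ, the double series ∑_{m,n≥0} (u^m v^n)/(m! n!) · I_{m+n} equals exp(α(u+v)² + (u+v)·I_1), where I_1 = νw - 2αz - ξ. -/

import Mathlib

open Complex

noncomputable def Ic (ν α ξ z w : ℂ) : ℕ → ℂ
  | 0 => 1
  | 1 => ν * w - 2 * α * z - ξ
  | (n + 2) => (ν * w - 2 * α * z - ξ) * Ic ν α ξ z w (n + 1)
      + 2 * α * (n + 1) * Ic ν α ξ z w n

/-!
`I_n / n!` is the `n`-th Taylor coefficient of `exp (α s² + I₁ s) = exp (α s²) · exp (I₁ s)`: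
the coefficients of this Cauchy product obey the three-term recursion of `I_n / n!`, because
`d/ds` multiplies `exp (α s²)` by `2 α s` and `exp (I₁ s)` by `I₁`. Summing the double series
along the diagonals `m + n = N` turns it, by the binomial theorem, into
`∑ N, (u + v)^N I_N / N!`; absolute convergence comes from comparing with the same series
for `‖α‖`, `‖I₁‖` and `‖u‖ + ‖v‖`.
-/

open Finset Finset.Nat
open scoped Nat

section Coefficients

variable {K : Type*} [Field K]

noncomputable def expSqCoeff (a : K) (i : ℕ) : K :=
  if Even i then a ^ (i / 2) / (i / 2)! else 0

noncomputable def expQuadCoeff (a c : K) (n : ℕ) : K :=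
  ∑ p ∈ antidiagonal n, expSqCoeff a p.1 * (c ^ p.2 / p.2 !)

lemma expSqCoeff_one (a : K) : expSqCoeff a 1 = 0 := by
  simp [expSqCoeff]

lemma expQuadCoeff_zero (a c : K) : expQuadCoeff a c 0 = 1 := by
  simp [expQuadCoeff, expSqCoeff]

lemma expQuadCoeff_one (a c : K) : expQuadCoeff a c 1 = c := by
  simp [expQuadCoeff, expSqCoeff, sum_antidiagonal_succ]

variable [CharZero K]

lemma add_two_mul_expSqCoeff_add_two (a : K) (i : ℕ) :
    ((i : K) + 2) * expSqCoeff a (i + 2) = 2 * a * expSqCoeff a i := by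
  rcases Nat.even_or_odd' i with ⟨k, rfl | rfl⟩
  · have hk : (2 * k + 2) / 2 = k + 1 := by omega
    simp only [expSqCoeff, Nat.even_add, even_two, even_two_mul, if_true, hk,
      Nat.mul_div_cancel_left k two_pos, Nat.factorial_succ]
    push_cast
    field_simp
    ring
  · simp [expSqCoeff, Nat.even_add, parity_simps]

lemma add_one_mul_pow_div_factorial (c : K) (j : ℕ) :
    ((j : K) + 1) * (c ^ (j + 1) / (j + 1)!) = c * (c ^ j / j !) := by
  rw [Nat.factorial_succ]
  push_cast
  field_simp
  ring

lemma expQuadCoeff_add_two (a c : K) (n : ℕ) :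
    ((n : K) + 2) * expQuadCoeff a c (n + 2) =
      c * expQuadCoeff a c (n + 1) + 2 * a * expQuadCoeff a c n := by
  set e : ℕ → K := fun j => c ^ j / (j ! : K)
  have hsplit : ((n : K) + 2) * expQuadCoeff a c (n + 2) =
      ∑ p ∈ antidiagonal (n + 2), (p.1 : K) * expSqCoeff a p.1 * e p.2 +
        ∑ p ∈ antidiagonal (n + 2), expSqCoeff a p.1 * ((p.2 : K) * e p.2) := by
    rw [expQuadCoeff, mul_sum, ← sum_add_distrib]
    refine sum_congr rfl fun p hp => ?_
    have : (p.1 : K) + p.2 = n + 2 := by exact_mod_cast mem_antidiagonal.mp hp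
    rw [← this]
    ring
  have hfirst : ∑ p ∈ antidiagonal (n + 2), (p.1 : K) * expSqCoeff a p.1 * e p.2 =
      2 * a * expQuadCoeff a c n := by
    rw [sum_antidiagonal_succ, sum_antidiagonal_succ, expQuadCoeff, mul_sum]
    simp only [Nat.cast_zero, zero_mul, zero_add, Nat.cast_add, Nat.cast_one,
      expSqCoeff_one, mul_zero, add_assoc, one_add_one_eq_two]
    exact sum_congr rfl fun p _ => by
      linear_combination e p.2 * add_two_mul_expSqCoeff_add_two a p.1
  have hsecond : ∑ p ∈ antidiagonal (n + 2), expSqCoeff a p.1 * ((p.2 : K) * e p.2) =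
      c * expQuadCoeff a c (n + 1) := by
    rw [sum_antidiagonal_succ', expQuadCoeff, mul_sum]
    simp only [e, Nat.cast_zero, zero_mul, mul_zero, zero_add, Nat.cast_add, Nat.cast_one,
      add_one_mul_pow_div_factorial]
    exact sum_congr rfl fun p _ => by ring
  rw [hsplit, hfirst, hsecond]
  ring

lemma sum_antidiagonal_pow_div_factorial_mul (x y : K) (f : ℕ → K) (n : ℕ) :
    ∑ p ∈ antidiagonal n, x ^ p.1 * y ^ p.2 / (p.1 ! * p.2 !) * f (p.1 + p.2) =
      (x + y) ^ n / n ! * f n := by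
  rw [(Commute.all x y).add_pow', sum_div, sum_mul]
  refine sum_congr rfl fun p hp => ?_
  rw [← mem_antidiagonal.mp hp, nsmul_eq_mul, Nat.cast_add_choose]
  field_simp [(p.1 + p.2).factorial_ne_zero]

end Coefficients

lemma Ic_eq_factorial_mul_expQuadCoeff (ν α ξ z w : ℂ) (n : ℕ) :
    Ic ν α ξ z w n = n ! * expQuadCoeff α (ν * w - 2 * α * z - ξ) n := by
  induction n using Nat.twoStepInduction with
  | zero => simp [Ic, expQuadCoeff_zero]
  | one => simp [Ic, expQuadCoeff_one]
  | more n ih ih' =>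
    rw [Ic, ih, ih', Nat.factorial_succ (n + 1), Nat.factorial_succ n]
    push_cast
    linear_combination (n + 1 : ℂ) * n ! * (expQuadCoeff_add_two α (ν * w - 2 * α * z - ξ) n).symm

section Analytic

open NormedSpace

variable {𝕜 : Type*} [RCLike 𝕜]

lemma norm_expSqCoeff (a : 𝕜) (i : ℕ) : ‖expSqCoeff a i‖ = expSqCoeff ‖a‖ i := by
  unfold expSqCoeff
  split_ifs <;> simp

lemma hasSum_expSqCoeff_mul_pow (a s : 𝕜) :
    HasSum (fun i => expSqCoeff a i * s ^ i) (exp (a * s ^ 2)) := by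
  rw [← (mul_right_injective₀ two_ne_zero).hasSum_iff]
  · refine (expSeries_div_hasSum_exp (a * s ^ 2)).congr_fun fun k => ?_
    simp [expSqCoeff, mul_pow, pow_mul, div_mul_eq_mul_div]
  · rintro i hi
    have : ¬ Even i := by rintro ⟨k, rfl⟩; exact hi ⟨k, two_mul k⟩
    simp [expSqCoeff, this]

lemma hasSum_expQuadCoeff_mul_pow (a c s : 𝕜) :
    HasSum (fun n => expQuadCoeff a c n * s ^ n) (exp (a * s ^ 2 + c * s)) := by
  set f : ℕ → 𝕜 := fun i => expSqCoeff a i * s ^ i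
  set g : ℕ → 𝕜 := fun j => (c * s) ^ j / (j ! : 𝕜)
  have hf : Summable fun i => ‖f i‖ :=
    (hasSum_expSqCoeff_mul_pow ‖a‖ ‖s‖).summable.congr fun i => by
      simp [f, norm_expSqCoeff]
  have hg : Summable fun j => ‖g j‖ := norm_expSeries_div_summable (c * s)
  have hprod := (summable_norm_sum_mul_antidiagonal_of_summable_norm hf hg).of_norm.hasSum
  rw [← tsum_mul_tsum_eq_tsum_sum_antidiagonal_of_summable_norm hf hg,
    (hasSum_expSqCoeff_mul_pow a s).tsum_eq, (expSeries_div_hasSum_exp (c * s)).tsum_eq,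
    ← NormedSpace.exp_add] at hprod
  refine hprod.congr_fun fun n => ?_
  rw [expQuadCoeff, sum_mul]
  refine sum_congr rfl fun p hp => ?_
  rw [← mem_antidiagonal.mp hp]
  simp only [f, g]
  ring

lemma norm_expQuadCoeff_le (a c : 𝕜) (n : ℕ) :
    ‖expQuadCoeff a c n‖ ≤ expQuadCoeff ‖a‖ ‖c‖ n :=
  (norm_sum_le _ _).trans_eq <| sum_congr rfl fun p _ => by
    simp [norm_expSqCoeff]

lemma hasSum_pow_mul_pow_div_factorial_mul {u v S : 𝕜} {f : ℕ → 𝕜}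
    (hf : Summable fun n => (‖u‖ + ‖v‖) ^ n / n ! * ‖f n‖)
    (hS : HasSum (fun n => (u + v) ^ n / n ! * f n) S) :
    HasSum (fun p : ℕ × ℕ => u ^ p.1 * v ^ p.2 / (p.1 ! * p.2 !) * f (p.1 + p.2)) S := by
  set F : ℕ × ℕ → 𝕜 := fun p => u ^ p.1 * v ^ p.2 / (p.1 ! * p.2 !) * f (p.1 + p.2)
  let e := HasAntidiagonal.sigmaAntidiagonalEquivProd (A := ℕ)
  have hnorm : Summable fun x => ‖F (e x)‖ := by
    refine (summable_sigma_of_nonneg fun _ => norm_nonneg _).2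
      ⟨fun n => (hasSum_fintype _).summable, hf.congr fun n => ?_⟩
    rw [← sum_antidiagonal_pow_div_factorial_mul _ _ (‖f ·‖), ← Finset.tsum_subtype]
    refine tsum_congr fun p => ?_
    simp [F, e]
  have hFsum : Summable F := ((e.summable_iff (f := fun p => ‖F p‖)).1 hnorm).of_norm
  have hfibers := ((e.hasSum_iff).2 hFsum.hasSum).sigma fun n => hasSum_fintype _
  rw [hS.unique (hfibers.congr_fun fun n => ?_)]
  · exact hFsum.hasSum
  · rw [← sum_antidiagonal_pow_div_factorial_mul _ _ f, ← Finset.sum_coe_sort]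
    rfl

end Analytic

theorem stmt5 (ν α ξ z w u v : ℂ) :
    HasSum (fun p : ℕ × ℕ =>
        u ^ p.1 * v ^ p.2 / ((p.1.factorial : ℂ) * (p.2.factorial : ℂ)) *
          Ic ν α ξ z w (p.1 + p.2))
      (Complex.exp (α * (u + v) ^ 2 + (u + v) * (ν * w - 2 * α * z - ξ))) := by
  set c := ν * w - 2 * α * z - ξ
  have hIc : ∀ n, Ic ν α ξ z w n = n ! * expQuadCoeff α c n :=
    Ic_eq_factorial_mul_expQuadCoeff ν α ξ z w
  refine hasSum_pow_mul_pow_div_factorial_mul ?_ ?_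
  · refine (hasSum_expQuadCoeff_mul_pow ‖α‖ ‖c‖ (‖u‖ + ‖v‖)).summable.of_nonneg_of_le
      (fun n => by positivity) fun n => ?_
    rw [hIc, norm_mul, Complex.norm_natCast, ← mul_assoc,
      div_mul_cancel₀ _ (by positivity), mul_comm]
    gcongr
    exact norm_expQuadCoeff_le α c n
  · rw [Complex.exp_eq_exp_ℂ, mul_comm (u + v)]
    refine (hasSum_expQuadCoeff_mul_pow α c (u + v)).congr_fun fun n => ?_
    rw [hIc, ← mul_assoc, div_mul_cancel₀ _ (mod_cast n.factorial_ne_zero), mul_comm]
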